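/- arXiv:1103.5078 — 3 statements merged into one kernel-verified Lean document; each statement's English description precedes it below -/
import Mathlib

section
/- Let A = (A, δ^A, σ^A, τ^A) and B = (B, δ^B, σ^B, τ^B) be fuzzy automata over a complete residuated lattice L and alphabet X. A fuzzy relation φ : A×B → L satisfies the forward-simulation conditions (fs-2): φ⁻¹ ∘ δ_x^A ≤ δ_x^B ∘ φ⁻¹ for all x ∈ X, and (fs-3): φ⁻¹ ∘ τ^A ≤ τ^B, if and only if φ ≤ φ^{fs}(φ) and φ ≤ ψ^{fs}, where ψ^{fs} = τ^A → τ^B and φ^{fs}(α) = ⋀_{x∈X} [(δ_x^B ∘ α⁻¹) \ δ_x^A]⁻¹. -/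
class CRL (L : Type*) extends CompleteLattice L where
  mul : L → L → L
  resid : L → L → L
  mul_comm : ∀ x y : L, mul x y = mul y x
  mul_assoc : ∀ x y z : L, mul (mul x y) z = mul x (mul y z)
  mul_top : ∀ x : L, mul x ⊤ = x
  adj : ∀ x y z : L, mul x y ≤ z ↔ x ≤ resid y z

namespace CRL

/-- Composition of fuzzy relations: (φ∘ψ)(a,c) = ⋁_b φ(a,b) ⊗ ψ(b,c). -/
def comp {L A B C : Type*} [CRL L] (φ : A → B → L) (ψ : B → C → L) : A → C → L :=
  fun a c => ⨆ b, mul (φ a b) (ψ b c)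

/-- Converse of a fuzzy relation: φ⁻¹(b,a) = φ(a,b). -/
def conv {L A B : Type*} [CRL L] (φ : A → B → L) : B → A → L := fun b a => φ a b

/-- Composition of a fuzzy set with a fuzzy relation: (f∘φ)(b) = ⋁_a f(a) ⊗ φ(a,b). -/
def scomp {L A B : Type*} [CRL L] (f : A → L) (φ : A → B → L) : B → L :=
  fun b => ⨆ a, mul (f a) (φ a b)

/-- Composition of a fuzzy relation with a fuzzy set: (φ∘g)(a) = ⋁_b φ(a,b) ⊗ g(b). -/
def compv {L A B : Type*} [CRL L] (φ : A → B → L) (g : B → L) : A → L :=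
  fun a => ⨆ b, mul (φ a b) (g b)

/-- Left residual: (φ\β)(a,b) = ⋀_{b'} (β(b,b') → φ(a,b')). -/
def lres {L A B : Type*} [CRL L] (φ : A → B → L) (β : B → B → L) : A → B → L :=
  fun a b => ⨅ b', resid (β b b') (φ a b')

/-- Right residual: (φ/α)(a,b) = ⋀_{a'} (α(a',a) → φ(a',b)). -/
def rres {L A B : Type*} [CRL L] (φ : A → B → L) (α : A → A → L) : A → B → L :=
  fun a b => ⨅ a', resid (α a' a) (φ a' b)

end CRL

open CRL

theorem fs_conditions_iff {L X A B : Type*} [CRL L] [Fintype X] [Fintype A] [Fintype B]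
    (δA : X → A → A → L) (σA τA : A → L)
    (δB : X → B → B → L) (σB τB : B → L)
    (φ : A → B → L) :
    ((∀ x, comp (conv φ) (δA x) ≤ comp (δB x) (conv φ)) ∧ compv (conv φ) τA ≤ τB) ↔
    (φ ≤ (fun a b => ⨅ x, conv (lres (comp (δB x) (conv φ)) (δA x)) a b) ∧
     φ ≤ fun a b => CRL.resid (τA a) (τB b)) := by
  simp only [comp, conv, compv, lres, Pi.le_def, iSup_le_iff, le_iInf_iff, ← CRL.adj]
  constructor
  · rintro ⟨h1, h2⟩
    exact ⟨fun a b x a' => h1 x b a' a, fun a b => h2 b a⟩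
  · rintro ⟨h1, h2⟩
    exact ⟨fun x b a' a => h1 a b x a', fun b a => h2 a b⟩
end

section
/- Let φ : R(A,B) → R(A,B) be an isotone function on the complete lattice of fuzzy relations and ψ ∈ R(A,B). Define φ₁ = ψ and φ_{k+1} = φ_k ∧ φ(φ_k). Then the sequence {φ_k} is descending, and if φ_k = φ_{k+1} for some k, then φ_k is the greatest post-fixed point of φ contained in ψ, i.e., the greatest α ∈ R(A,B) with α ≤ φ(α) and α ≤ ψ. -/
open CRL

theorem seq_descending_and_stabilize {L A B : Type*} [CRL L]
    (φ : (A → B → L) → (A → B → L)) (hφ : Monotone φ)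
    (ψ : A → B → L) (s : ℕ → A → B → L)
    (h0 : s 0 = ψ) (hs : ∀ k, s (k + 1) = s k ⊓ φ (s k)) :
    (∀ k, s (k + 1) ≤ s k) ∧
    ∀ k, s k = s (k + 1) →
      IsGreatest {α : A → B → L | α ≤ φ α ∧ α ≤ ψ} (s k) := by
  have hdesc : ∀ k, s (k + 1) ≤ s k := fun k => (hs k) ▸ inf_le_left
  refine ⟨hdesc, fun k hk => ?_⟩
  have hle0 : ∀ n, s n ≤ ψ := by
    intro n
    induction n with
    | zero => exact h0.le
    | succ m ih => exact (hdesc m).trans ih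
  have hfix : s k ≤ φ (s k) := by
    calc s k = s (k+1) := hk
    _ ≤ φ (s k) := (hs k) ▸ inf_le_right
  refine ⟨⟨hfix, hle0 k⟩, fun α hα => ?_⟩
  obtain ⟨hα1, hα2⟩ := hα
  induction k with
  | zero => exact h0 ▸ hα2
  | succ m ih =>
    have hm : α ≤ s m := by
      clear ih hk hfix
      induction m with
      | zero => exact h0 ▸ hα2
      | succ n ihn => rw [hs n]; exact le_inf ihn (hα1.trans (hφ ihn))
    rw [hs m]
    exact le_inf hm (hα1.trans (hφ hm))
end

section
/- Let A and B be fuzzy automata (with finite state sets) over a complete residuated lattice L satisfying x ∨ (⋀_i y_i) = ⋀_i (x ∨ y_i) and x ⊗ (⋀_i y_i) = ⋀_i (x ⊗ y_i). Define φ₁ = ψ^{fs} = τ^A → τ^B and φ_{k+1} = φ_k ∧ φ^{fs}(φ_k), and let φ = ⋀_{k∈ℕ} φ_k. Then φ is the greatest fuzzy relation in R(A,B) satisfying φ⁻¹ ∘ δ_x^A ≤ δ_x^B ∘ φ⁻¹ for all x ∈ X and φ⁻¹ ∘ τ^A ≤ τ^B. -/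
open CRL


section Helpers
variable {L : Type*} [CRL L]

lemma mul_le_mul_l {x x' : L} (h : x ≤ x') (y : L) : CRL.mul x y ≤ CRL.mul x' y := by
  rw [CRL.adj]
  exact h.trans ((CRL.adj x' y (CRL.mul x' y)).mp le_rfl)

lemma mul_le_mul_r (x : L) {y y' : L} (h : y ≤ y') : CRL.mul x y ≤ CRL.mul x y' := by
  rw [CRL.mul_comm x y, CRL.mul_comm x y']
  exact mul_le_mul_l h x

lemma resid_le_resid (y : L) {z z' : L} (h : z ≤ z') : CRL.resid y z ≤ CRL.resid y z' := by
  rw [← CRL.adj]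
  exact ((CRL.adj _ y z).mpr le_rfl).trans h

lemma iInf_resid_le {ι : Type*} [Nonempty ι] (y : L) (f : ι → L) :
    ⨅ i, CRL.resid y (f i) ≤ CRL.resid y (⨅ i, f i) := by
  rw [← CRL.adj]
  refine le_iInf fun i => ?_
  exact (mul_le_mul_l (iInf_le _ i) y).trans ((CRL.adj _ y (f i)).mpr le_rfl)

lemma hd' (hd : ∀ (x : L) (S : Set L), x ⊔ sInf S = ⨅ y ∈ S, x ⊔ y)
    (x : L) (f : ℕ → L) : x ⊔ ⨅ k, f k = ⨅ k, x ⊔ f k := by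
  have := hd x (Set.range f)
  rwa [sInf_range, iInf_range] at this

lemma hm' (hm : ∀ (x : L) (S : Set L), CRL.mul x (sInf S) = ⨅ y ∈ S, CRL.mul x y)
    (x : L) (f : ℕ → L) : CRL.mul x (⨅ k, f k) = ⨅ k, CRL.mul x (f k) := by
  have := hm x (Set.range f)
  rwa [sInf_range, iInf_range] at this

lemma key_iInf_iSup (hd : ∀ (x : L) (S : Set L), x ⊔ sInf S = ⨅ y ∈ S, x ⊔ y)
    {ι : Type*} [Fintype ι] (h : ι → ℕ → L) (hh : ∀ i, Antitone (h i)) :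
    ⨅ k, ⨆ i, h i k ≤ ⨆ i, ⨅ k, h i k := by
  have main : ∀ t : Finset ι, (⨅ k, ⨆ i ∈ t, h i k) ≤ ⨆ i ∈ t, ⨅ k, h i k := by
    intro t
    classical
    induction t using Finset.induction_on with
    | empty => simp
    | @insert a t' ha ih =>
      have hg : Antitone (fun k => ⨆ i ∈ t', h i k) :=
        fun m n hmn => iSup₂_mono fun i _ => hh i hmn
      have h1 : (⨅ k, (h a k ⊔ ⨆ i ∈ t', h i k)) ≤
          ⨅ m, ⨅ n, (h a m ⊔ ⨆ i ∈ t', h i n) := by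
        refine le_iInf fun m => le_iInf fun n => (iInf_le _ (max m n)).trans ?_
        exact sup_le_sup (hh a (le_max_left m n)) (hg (le_max_right m n))
      have h2 : (⨅ m, ⨅ n, (h a m ⊔ ⨆ i ∈ t', h i n)) =
          (⨅ k, h a k) ⊔ (⨅ k, ⨆ i ∈ t', h i k) := by
        have : ∀ m, (⨅ n, (h a m ⊔ ⨆ i ∈ t', h i n)) =
            h a m ⊔ ⨅ n, ⨆ i ∈ t', h i n := fun m => (hd' hd _ _).symm
        rw [iInf_congr this]
        have := hd' hd (⨅ n, ⨆ i ∈ t', h i n) (fun m => h a m)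
        simp only [sup_comm] at this ⊢
        exact this.symm
      simp only [Finset.iSup_insert]
      exact (h1.trans h2.le).trans (sup_le_sup_left ih _)
  simpa using main Finset.univ

end Helpers

theorem greatest_fs_via_iInf {L X A B : Type*} [CRL L] [Fintype X] [Fintype A] [Fintype B]
    (hd : ∀ (x : L) (S : Set L), x ⊔ sInf S = ⨅ y ∈ S, x ⊔ y)
    (hm : ∀ (x : L) (S : Set L), CRL.mul x (sInf S) = ⨅ y ∈ S, CRL.mul x y)
    (δA : X → A → A → L) (σA τA : A → L)
    (δB : X → B → B → L) (σB τB : B → L)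
    (s : ℕ → A → B → L)
    (h0 : s 0 = fun a b => CRL.resid (τA a) (τB b))
    (hs : ∀ k, s (k + 1) = s k ⊓ fun a b =>
      ⨅ x, conv (lres (comp (δB x) (conv (s k))) (δA x)) a b) :
    IsGreatest {φ : A → B → L |
        (∀ x, comp (conv φ) (δA x) ≤ comp (δB x) (conv φ)) ∧ compv (conv φ) τA ≤ τB}
      (⨅ k, s k) := by
  classical
  -- the operator F
  set F : (A → B → L) → (A → B → L) := fun χ a b =>
    ⨅ x, ⨅ a', CRL.resid (δA x a a') (⨆ b', CRL.mul (δB x b b') (χ a' b')) with hF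
  have hsF : ∀ k, s (k + 1) = s k ⊓ F (s k) := by
    intro k
    rw [hs k]
    rfl
  -- equivalence E2
  have E2 : ∀ ψ χ : A → B → L,
      (∀ x, comp (conv ψ) (δA x) ≤ comp (δB x) (conv χ)) ↔ ψ ≤ F χ := by
    intro ψ χ
    constructor
    · intro h a b
      refine le_iInf fun x => le_iInf fun a' => ?_
      rw [← CRL.adj]
      exact le_trans (le_iSup (fun a => CRL.mul (ψ a b) (δA x a a')) a) (h x b a')
    · intro h x b a'
      refine iSup_le fun a => ?_
      have h2 : ψ a b ≤ CRL.resid (δA x a a')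
          (⨆ b', CRL.mul (δB x b b') (χ a' b')) :=
        ((h a b).trans (iInf_le _ x)).trans (iInf_le _ a')
      exact (CRL.adj _ _ _).mpr h2
  -- equivalence E1
  have E1 : ∀ ψ : A → B → L, compv (conv ψ) τA ≤ τB ↔ ψ ≤ s 0 := by
    intro ψ
    rw [h0]
    constructor
    · intro h a b
      rw [← CRL.adj]
      exact le_trans (le_iSup (fun a => CRL.mul (conv ψ b a) (τA a)) a) (h b)
    · intro h b
      refine iSup_le fun a => ?_
      exact (CRL.adj _ _ _).mpr (h a b)
  -- monotonicity of F
  have Fmono : ∀ χ χ' : A → B → L, χ ≤ χ' → F χ ≤ F χ' := by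
    intro χ χ' h a b
    exact iInf_mono fun x => iInf_mono fun a' => resid_le_resid _
      (iSup_mono fun b' => mul_le_mul_r _ (h a' b'))
  -- s is antitone
  have sdec : ∀ k, s (k + 1) ≤ s k := fun k => (hsF k).le.trans inf_le_left
  have sAnti : Antitone s := antitone_nat_of_succ_le sdec
  set φ : A → B → L := ⨅ k, s k with hφ
  have hφab : ∀ a b, φ a b = ⨅ k, s k a b := by
    intro a b; simp [hφ, iInf_apply]
  have hφle : ∀ k, φ ≤ s k := fun k => iInf_le _ k
  -- φ ≤ F φ
  have hkey : φ ≤ F φ := by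
    intro a b
    have step1 : φ a b ≤ ⨅ k, F (s k) a b := by
      refine le_iInf fun k => ?_
      exact ((hφle (k + 1)).trans ((hsF k).le.trans inf_le_right)) a b
    refine step1.trans ?_
    refine le_iInf fun x => le_iInf fun a' => ?_
    have step2 : (⨅ k, F (s k) a b) ≤
        ⨅ k, CRL.resid (δA x a a') (⨆ b', CRL.mul (δB x b b') (s k a' b')) :=
      iInf_mono fun k => (iInf_le _ x).trans (iInf_le _ a')
    refine step2.trans ?_
    have step3 : (⨅ k, CRL.resid (δA x a a') (⨆ b', CRL.mul (δB x b b') (s k a' b'))) ≤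
        CRL.resid (δA x a a') (⨅ k, ⨆ b', CRL.mul (δB x b b') (s k a' b')) :=
      iInf_resid_le _ _
    refine step3.trans (resid_le_resid _ ?_)
    have step4 : (⨅ k, ⨆ b', CRL.mul (δB x b b') (s k a' b')) ≤
        ⨆ b', ⨅ k, CRL.mul (δB x b b') (s k a' b') :=
      key_iInf_iSup hd _ (fun b' => fun m n hmn => mul_le_mul_r _ (sAnti hmn a' b'))
    refine step4.trans (iSup_mono fun b' => ?_)
    rw [hφab a' b', ← hm' hm]
  constructor
  · constructor
    · exact (E2 φ φ).mpr hkey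
    · exact (E1 φ).mpr (hφle 0)
  · rintro ψ ⟨h1, h2⟩
    have hψ : ∀ k, ψ ≤ s k := by
      intro k
      induction k with
      | zero => exact (E1 ψ).mp h2
      | succ k ih =>
        rw [hsF k]
        exact le_inf ih (((E2 ψ ψ).mp h1).trans (Fmono _ _ ih))
    exact le_iInf hψ
end
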